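/- arXiv:1401.8249 — 3 statements merged into one kernel-verified Lean document; each statement's English description precedes it below -/
import Mathlib

section
/- Let R be a commutative ring, let A₁ = [[a₁,b₁],[c₁,d₁]] and A₂ = [[a₂,b₂],[c₂,d₂]] be 2×2 matrices over R with det A₂ = 1, and let x, y, u, v ∈ R. Then det[[x,b₁],[y,d₁]]·det[[a₂,u],[c₂,v]] − det[[x,a₁],[y,c₁]]·det[[b₂,u],[d₂,v]] equals the determinant of the 2×2 matrix whose first column is (x,y) and whose second column is the vector A₁·A₂⁻¹·(u,v). In particular, when A₁ = A₂ = I this expression equals x·v − y·u. -/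
open Matrix

/-- Gluing two trinodes along an edge: for `2×2` matrices `A₁, A₂` over a commutative ring
with `det A₂ = 1` and scalars `x, y, u, v`, the glued Γ-tensor form equals the Plücker
coordinate of `(x,y)` against `A₁ · A₂⁻¹ · (u,v)`; in particular when `A₁ = A₂ = 1` it is
`x·v − y·u`. -/
theorem glued_trinode_form (R : Type*) [CommRing R]
    (A₁ A₂ : Matrix (Fin 2) (Fin 2) R) (hA₂ : A₂.det = 1) (x y u v : R) :
    (!![x, A₁ 0 1; y, A₁ 1 1]).det * (!![A₂ 0 0, u; A₂ 1 0, v]).det -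
        (!![x, A₁ 0 0; y, A₁ 1 0]).det * (!![A₂ 0 1, u; A₂ 1 1, v]).det =
      (!![x, ((A₁ * A₂⁻¹) *ᵥ ![u, v]) 0; y, ((A₁ * A₂⁻¹) *ᵥ ![u, v]) 1]).det ∧
    (A₁ = 1 → A₂ = 1 →
      (!![x, A₁ 0 1; y, A₁ 1 1]).det * (!![A₂ 0 0, u; A₂ 1 0, v]).det -
          (!![x, A₁ 0 0; y, A₁ 1 0]).det * (!![A₂ 0 1, u; A₂ 1 1, v]).det = x * v - y * u) := by
  have hinv : A₂⁻¹ = A₂.adjugate := by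
    rw [Matrix.inv_def, hA₂]; simp
  constructor
  · rw [hinv]
    simp [Matrix.det_fin_two, Matrix.mul_apply, Matrix.mulVec, Matrix.adjugate_fin_two,
      Fin.sum_univ_succ, dotProduct]
    ring
  · intro h1 h2
    subst h1 h2
    simp [Matrix.det_fin_two, Matrix.one_apply]
end

section
/- Let H ⊆ ℕ⁹ be the set of tuples (a, b, c, x, y, u, v, s, t) such that: a ≤ b + c, b ≤ a + c, c ≤ a + b; a + b + c is even; x + y = a; u + v = b; and s + t = c. Then H is an additive submonoid of ℕ⁹, and it is generated as a monoid by the twelve elements in which (a,b,c) is one of (1,1,0), (1,0,1), (0,1,1), and for each of the two coordinates among {a,b,c} equal to 1, exactly one element of its associated pair (x,y for a; u,v for b; s,t for c) equals 1, all other coordinates being 0. -/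
/-!
An element of `H` with edge weights `(a, b, c)` is a sum of `p` edge-pair diagrams of type
`ab`, `q` of type `ac` and `r` of type `bc`, where `a = p + q`, `b = p + r`, `c = q + r`; this
system is solvable in `ℕ` exactly when the triangle inequalities hold and `a + b + c` is even.
The orientation counts `x`, `u`, `s` at the three leaves are then shared out between the two
blocks meeting at that edge, and inside each block a `2 × 2` table of natural numbers with
prescribed margins says how many of each of its four generators to take.
-/

theorem Nat.exists_add_eq_of_triangle_of_even {a b c : ℕ} (hab : a ≤ b + c)
    (hbc : b ≤ a + c) (hca : c ≤ a + b) (heven : Even (a + b + c)) :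
    ∃ p q r, a = p + q ∧ b = p + r ∧ c = q + r := by
  obtain ⟨m, hm⟩ := heven
  exact ⟨(a + b - c) / 2, (a + c - b) / 2, (b + c - a) / 2, by omega, by omega, by omega⟩

theorem Nat.exists_add_eq_of_le_add {x p q : ℕ} (h : x ≤ p + q) :
    ∃ x₁ x₂, x₁ + x₂ = x ∧ x₁ ≤ p ∧ x₂ ≤ q :=
  ⟨min x p, x - min x p, by omega, by omega, by omega⟩

theorem Nat.exists_two_by_two_table {x u p : ℕ} (hx : x ≤ p) (hu : u ≤ p) :
    ∃ n₁ n₂ n₃ n₄, n₁ + n₂ + n₃ + n₄ = p ∧ n₁ + n₂ = x ∧ n₁ + n₃ = u :=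
  ⟨min x u, x - min x u, u - min x u, p + min x u - x - u, by omega, by omega, by omega⟩

def trinodeWeightMonoid : AddSubmonoid (Fin 9 → ℕ) where
  carrier := {w | w 0 ≤ w 1 + w 2 ∧ w 1 ≤ w 0 + w 2 ∧ w 2 ≤ w 0 + w 1 ∧
    Even (w 0 + w 1 + w 2) ∧ w 3 + w 4 = w 0 ∧ w 5 + w 6 = w 1 ∧ w 7 + w 8 = w 2}
  zero_mem' := by simp
  add_mem' := by
    rintro v w ⟨hv₁, hv₂, hv₃, hv₄, hv₅, hv₆, hv₇⟩ ⟨hw₁, hw₂, hw₃, hw₄, hw₅, hw₆, hw₇⟩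
    have heven : Even (v 0 + v 1 + v 2 + (w 0 + w 1 + w 2)) := hv₄.add hw₄
    simp only [Set.mem_ofPred_eq, Pi.add_apply]
    refine ⟨by omega, by omega, by omega, ?_, by omega, by omega, by omega⟩
    convert heven using 1
    ring

theorem mem_trinodeWeightMonoid {w : Fin 9 → ℕ} : w ∈ trinodeWeightMonoid ↔
    w 0 ≤ w 1 + w 2 ∧ w 1 ≤ w 0 + w 2 ∧ w 2 ≤ w 0 + w 1 ∧
      Even (w 0 + w 1 + w 2) ∧ w 3 + w 4 = w 0 ∧ w 5 + w 6 = w 1 ∧ w 7 + w 8 = w 2 :=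
  Iff.rfl

def trinodeGenerators : Fin 12 → Fin 9 → ℕ :=
  ![![1, 1, 0, 1, 0, 1, 0, 0, 0], ![1, 1, 0, 1, 0, 0, 1, 0, 0],
    ![1, 1, 0, 0, 1, 1, 0, 0, 0], ![1, 1, 0, 0, 1, 0, 1, 0, 0],
    ![1, 0, 1, 1, 0, 0, 0, 1, 0], ![1, 0, 1, 1, 0, 0, 0, 0, 1],
    ![1, 0, 1, 0, 1, 0, 0, 1, 0], ![1, 0, 1, 0, 1, 0, 0, 0, 1],
    ![0, 1, 1, 0, 0, 1, 0, 1, 0], ![0, 1, 1, 0, 0, 1, 0, 0, 1],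
    ![0, 1, 1, 0, 0, 0, 1, 1, 0], ![0, 1, 1, 0, 0, 0, 1, 0, 1]]

theorem range_trinodeGenerators : Set.range trinodeGenerators =
    { ![1, 1, 0, 1, 0, 1, 0, 0, 0], ![1, 1, 0, 1, 0, 0, 1, 0, 0],
      ![1, 1, 0, 0, 1, 1, 0, 0, 0], ![1, 1, 0, 0, 1, 0, 1, 0, 0],
      ![1, 0, 1, 1, 0, 0, 0, 1, 0], ![1, 0, 1, 1, 0, 0, 0, 0, 1],
      ![1, 0, 1, 0, 1, 0, 0, 1, 0], ![1, 0, 1, 0, 1, 0, 0, 0, 1],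
      ![0, 1, 1, 0, 0, 1, 0, 1, 0], ![0, 1, 1, 0, 0, 1, 0, 0, 1],
      ![0, 1, 1, 0, 0, 0, 1, 1, 0], ![0, 1, 1, 0, 0, 0, 1, 0, 1] } := by
  simp only [trinodeGenerators, Matrix.range_cons, Matrix.range_empty, Set.union_empty,
    Set.singleton_union]

theorem trinodeGenerators_mem (i : Fin 12) : trinodeGenerators i ∈ trinodeWeightMonoid := by
  rw [mem_trinodeWeightMonoid]
  revert i
  decide

theorem trinodeWeightMonoid_le_closure :
    trinodeWeightMonoid ≤ AddSubmonoid.closure (Set.range trinodeGenerators) := by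
  rintro w ⟨hab, hbc, hca, heven, hxy, huv, hst⟩
  rw [AddSubmonoid.mem_closure_range_iff_of_fintype]
  obtain ⟨p, q, r, ha, hb, hc⟩ := Nat.exists_add_eq_of_triangle_of_even hab hbc hca heven
  obtain ⟨x₁, x₂, hx, hx₁, hx₂⟩ := Nat.exists_add_eq_of_le_add (show w 3 ≤ p + q by omega)
  obtain ⟨u₁, u₃, hu, hu₁, hu₃⟩ := Nat.exists_add_eq_of_le_add (show w 5 ≤ p + r by omega)
  obtain ⟨s₂, s₃, hs, hs₂, hs₃⟩ := Nat.exists_add_eq_of_le_add (show w 7 ≤ q + r by omega)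
  obtain ⟨n₁, n₂, n₃, n₄, hn, hnx, hnu⟩ := Nat.exists_two_by_two_table hx₁ hu₁
  obtain ⟨m₁, m₂, m₃, m₄, hm, hmx, hms⟩ := Nat.exists_two_by_two_table hx₂ hs₂
  obtain ⟨k₁, k₂, k₃, k₄, hk, hku, hks⟩ := Nat.exists_two_by_two_table hu₃ hs₃
  refine ⟨![n₁, n₂, n₃, n₄, m₁, m₂, m₃, m₄, k₁, k₂, k₃, k₄], funext fun j => ?_⟩
  fin_cases j <;>
    simp only [Finset.sum_apply, Pi.smul_apply, smul_eq_mul, Fin.sum_univ_succ, Fin.sum_univ_zero,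
      trinodeGenerators, Matrix.cons_val, Matrix.cons_val_succ, Fin.reduceFinMk] <;>
    omega

theorem closure_trinodeGenerators :
    AddSubmonoid.closure (Set.range trinodeGenerators) = trinodeWeightMonoid :=
  le_antisymm (AddSubmonoid.closure_le.2 (Set.range_subset_iff.2 trinodeGenerators_mem))
    trinodeWeightMonoid_le_closure

/-- The semigroup `H_{0,3}` of weight diagrams of the trinode.  A tuple
`(a, b, c, x, y, u, v, s, t) ∈ ℕ⁹` (coordinates indexed `0,…,8`) lies in it iff `a, b, c`
satisfy the triangle inequalities, `a + b + c` is even, and `x + y = a`, `u + v = b`,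
`s + t = c`.  It is an additive submonoid of `ℕ⁹`, generated by the twelve weight diagrams
of the Plücker generators. -/
theorem trinode_weight_monoid_generation :
    {w : Fin 9 → ℕ | w 0 ≤ w 1 + w 2 ∧ w 1 ≤ w 0 + w 2 ∧ w 2 ≤ w 0 + w 1 ∧
        Even (w 0 + w 1 + w 2) ∧ w 3 + w 4 = w 0 ∧ w 5 + w 6 = w 1 ∧ w 7 + w 8 = w 2} =
      ((AddSubmonoid.closure
        { ![1, 1, 0, 1, 0, 1, 0, 0, 0], ![1, 1, 0, 1, 0, 0, 1, 0, 0],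
          ![1, 1, 0, 0, 1, 1, 0, 0, 0], ![1, 1, 0, 0, 1, 0, 1, 0, 0],
          ![1, 0, 1, 1, 0, 0, 0, 1, 0], ![1, 0, 1, 1, 0, 0, 0, 0, 1],
          ![1, 0, 1, 0, 1, 0, 0, 1, 0], ![1, 0, 1, 0, 1, 0, 0, 0, 1],
          ![0, 1, 1, 0, 0, 1, 0, 1, 0], ![0, 1, 1, 0, 0, 1, 0, 0, 1],
          ![0, 1, 1, 0, 0, 0, 1, 1, 0], ![0, 1, 1, 0, 0, 0, 1, 0, 1] } :
        AddSubmonoid (Fin 9 → ℕ)) : Set (Fin 9 → ℕ)) := by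
  rw [← range_trinodeGenerators, closure_trinodeGenerators]
  rfl
end

section
/- Let k be a field and A a commutative k-algebra that is an integral domain. Let F : ℕ → Submodule k A be a filtration satisfying: F is monotone; 1 ∈ F 0; F m · F n ≤ F (m+n) for all m, n; and ⋃ₙ F n = A. Let R_F ⊆ A[t] be the Rees algebra, i.e. the k-subalgebra of the polynomial ring A[t] consisting of polynomials p such that the coefficient of tⁿ in p lies in F n for every n. Then t ∈ R_F, and R_F is flat as a module over the polynomial ring k[t] (via the k-algebra map k[t] → R_F sending t to t). -/
/-! A nonzero polynomial over a field is a unit times a monic one, and monic polynomials stay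
monic, hence regular, under any ring map. So `A[t]` is torsion-free over `k[t]`, hence so is the
Rees algebra inside it, and torsion-free modules over the principal ideal domain `k[t]` are flat. -/

open Polynomial

/-- `A[t]` is an algebra over `k[t]` via the map sending `t` to `t`
(i.e. `Polynomial.map (algebraMap k A)`). -/
noncomputable instance polyPolyAlgebra (k A : Type*) [CommRing k] [CommRing A] [Algebra k A] :
    Algebra (Polynomial k) (Polynomial A) :=
  (Polynomial.mapRingHom (algebraMap k A)).toAlgebra

theorem Polynomial.isRegular_map_of_ne_zero {k A : Type*} [Field k] [CommRing A] (f : k →+* A)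
    {p : k[X]} (hp : p ≠ 0) : IsRegular (p.map f) := by
  have hmonic : (p * C p.leadingCoeff⁻¹).Monic := monic_mul_leadingCoeff_inv hp
  have hreg := (hmonic.map f).isRegular
  rw [Polynomial.map_mul, isRegular_mul_iff] at hreg
  exact hreg.1

instance Polynomial.isTorsionFree_polyPolyAlgebra (k A : Type*) [Field k] [CommRing A]
    [Algebra k A] : Module.IsTorsionFree k[X] A[X] :=
  Module.IsTorsionFree.comap (algebraMap k[X] A[X])
    (fun _ hr => isRegular_map_of_ne_zero _ hr.ne_zero) (fun r m => (Algebra.smul_def r m).symm)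

section Filtration

variable {k A : Type*} [CommRing k] [CommRing A] [Algebra k A] (F : ℕ → Submodule k A)
  (hmono : Monotone F) (hone : (1 : A) ∈ F 0) (hmul : ∀ m n, F m * F n ≤ F (m + n))

def filtrationReesAlgebra : Subalgebra k[X] A[X] where
  carrier := {p | ∀ n, p.coeff n ∈ F n}
  mul_mem' {p q} hp hq n := by
    rw [coeff_mul]
    refine Submodule.sum_mem _ fun ij hij => ?_
    rw [← Finset.HasAntidiagonal.mem_antidiagonal.mp hij]
    exact hmul _ _ (Submodule.mul_mem_mul (hp _) (hq _))
  add_mem' hp hq n := by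
    rw [coeff_add]
    exact add_mem (hp n) (hq n)
  algebraMap_mem' q n := by
    change (q.map (algebraMap k A)).coeff n ∈ F n
    rw [coeff_map, Algebra.algebraMap_eq_smul_one]
    exact hmono n.zero_le (Submodule.smul_mem _ _ hone)

theorem X_mem_filtrationReesAlgebra : (X : A[X]) ∈ filtrationReesAlgebra F hmono hone hmul := by
  intro n
  rcases eq_or_ne n 1 with rfl | hn
  · simpa using hmono zero_le_one hone
  · simp [coeff_X, Ne.symm hn]

end Filtration

theorem rees_algebra_flat_general (k A : Type*) [Field k] [CommRing A] [Algebra k A]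
    (F : ℕ → Submodule k A) (hmono : Monotone F) (hone : (1 : A) ∈ F 0)
    (hmul : ∀ m n, F m * F n ≤ F (m + n)) :
    ∃ R : Subalgebra (Polynomial k) (Polynomial A),
      (R : Set (Polynomial A)) = {p : Polynomial A | ∀ n, p.coeff n ∈ F n} ∧
      (Polynomial.X : Polynomial A) ∈ R ∧
      Module.Flat (Polynomial k) R :=
  ⟨filtrationReesAlgebra F hmono hone hmul, rfl, X_mem_filtrationReesAlgebra F hmono hone hmul,
    inferInstance⟩

/-- Let `F` be an increasing, exhaustive, multiplicative filtration of an integral domain `A`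
over a field `k`, with `1 ∈ F 0`.  The Rees algebra `R_F = {p ∈ A[t] | coeff n p ∈ F n}`
contains `t` and is flat over `k[t]` (where `k[t]` acts on `A[t]` via `t ↦ t`). -/
theorem rees_algebra_flat (k A : Type*) [Field k] [CommRing A] [IsDomain A] [Algebra k A]
    (F : ℕ → Submodule k A) (hmono : Monotone F) (hone : (1 : A) ∈ F 0)
    (hmul : ∀ m n, F m * F n ≤ F (m + n)) (hexh : ∀ a : A, ∃ n, a ∈ F n) :
    ∃ R : Subalgebra (Polynomial k) (Polynomial A),
      (R : Set (Polynomial A)) = {p : Polynomial A | ∀ n, p.coeff n ∈ F n} ∧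
      (Polynomial.X : Polynomial A) ∈ R ∧
      Module.Flat (Polynomial k) R :=
  rees_algebra_flat_general k A F hmono hone hmul
end
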